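/- For all integers n ≥ 2, r ≥ 1 and k ≥ 2, the number g_{n,r}(1k) is even. -/

import Mathlib

open Finset Polynomial

/-- The cycle of `π` starting at `m`: `m, π m, π² m, …` through one full period. -/
noncomputable def cycleList {n : ℕ} (π : Equiv.Perm (Fin n)) (m : Fin n) : List (Fin n) :=
  (List.range (Function.minimalPeriod π m)).map (fun k => (π ^ k) m)

/-- The minima of the cycles of `π`, listed in increasing order. -/
def cycleMins {n : ℕ} (π : Equiv.Perm (Fin n)) : List (Fin n) :=
  (Finset.univ.filter (fun m : Fin n => ∀ k < n, m ≤ (π ^ k) m)).sort (· ≤ ·)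

/-- The flattened permutation of `π`, as a word on the letters `1, …, n`:
erase the parentheses from the standard cycle form of `π`. -/
noncomputable def flattenPerm {n : ℕ} (π : Equiv.Perm (Fin n)) : List ℕ :=
  ((cycleMins π).map (cycleList π)).flatten.map (fun m => (m : ℕ) + 1)

/-- The number of occurrences of the pattern 13-2 in the word `w = w₁w₂⋯wₙ`
(1-based), i.e. the number of pairs `(i,j)` with `2 ≤ i < j ≤ n` and
`w_{i-1} < w_j < w_i`.  Below, `p.1` and `p.2` are the 0-based versions of `i` and `j`. -/
def occ (w : List ℕ) : ℕ :=
  ((Finset.range w.length ×ˢ Finset.range w.length).filter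
    (fun p : ℕ × ℕ => 1 ≤ p.1 ∧ p.1 < p.2 ∧
      w.getD (p.1 - 1) 0 < w.getD p.2 0 ∧ w.getD p.2 0 < w.getD p.1 0)).card

/-- `g_n = Σ_{π ∈ S_n} q^{occ(Flatten(π))} ∈ ℤ[q]`. -/
noncomputable def gPoly (n : ℕ) : Polynomial ℤ :=
  ∑ π : Equiv.Perm (Fin n), X ^ occ (flattenPerm π)

/-- `g_n(a₁⋯a_k)`: the sum of `q^{occ(Flatten(π))}` over the permutations `π` of length `n`
whose flattened permutation starts with the subword `a₁⋯a_k`. -/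
noncomputable def gPrefix (n : ℕ) (w : List ℕ) : Polynomial ℤ :=
  ∑ π ∈ Finset.univ.filter (fun π : Equiv.Perm (Fin n) => w <+: flattenPerm π),
    X ^ occ (flattenPerm π)

/-- `g_{n,r}(a₁⋯a_k)`: the number of permutations `π` of length `n` such that `Flatten(π)`
starts with `a₁⋯a_k` and has exactly `r` occurrences of the pattern 13-2. -/
noncomputable def gCount (n r : ℕ) (w : List ℕ) : ℕ :=
  (Finset.univ.filter (fun π : Equiv.Perm (Fin n) =>
    w <+: flattenPerm π ∧ occ (flattenPerm π) = r)).card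

/-! The word `Flatten(π)` forgets only where the cycles of the standard cycle form are cut.
Let `b a` be the last two letters of `Flatten(π)`. If `a` is not alone in the last cycle,
`π * (a b)` cuts it off as a new fixed point; if it is, `π * (a b)` appends it to the
preceding cycle. Since `a` exceeds every cycle minimum before it, both results are again in
standard cycle form with the same flattening, so `π ↦ π * (a b)` is a fixed-point-free
involution on each fibre of `Flatten` once `n ≥ 2`: every fibre, and hence every count of
permutations by a property of `Flatten(π)`, is even. -/

open Equiv Function

namespace List

variable {α : Type*} [DecidableEq α]

theorem prod_map_formPerm_apply_of_forall_notMem {cs : List (List α)} {x : α}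
    (h : ∀ l ∈ cs, x ∉ l) : (cs.map formPerm).prod x = x := by
  induction cs with
  | nil => rfl
  | cons l cs ih =>
    simp only [map_cons, prod_cons, Perm.mul_apply]
    rw [ih fun l' hl' => h l' (mem_cons_of_mem _ hl'),
      formPerm_apply_of_notMem (h l mem_cons_self)]

theorem prod_map_formPerm_apply_of_mem {cs : List (List α)} (hcs : cs.flatten.Nodup)
    {l : List α} (hl : l ∈ cs) {x : α} (hx : x ∈ l) :
    (cs.map formPerm).prod x = l.formPerm x := by
  obtain ⟨s, t, rfl⟩ := append_of_mem hl
  simp only [flatten_append, flatten_cons, nodup_append, mem_append] at hcs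
  obtain ⟨-, ⟨-, -, hlt⟩, hsl⟩ := hcs
  simp only [map_append, map_cons, prod_append, prod_cons, Perm.mul_apply]
  rw [prod_map_formPerm_apply_of_forall_notMem fun l' hl' hxl' =>
      hlt x hx x (mem_flatten_of_mem hl' hxl') rfl,
    prod_map_formPerm_apply_of_forall_notMem fun l' hl' hxl' =>
      hsl _ (mem_flatten_of_mem hl' hxl') _ (Or.inl (formPerm_apply_mem_of_mem hx)) rfl]

theorem minimalPeriod_formPerm_cons {x : α} {l : List α} (hl : (x :: l).Nodup) :
    minimalPeriod (formPerm (x :: l)) x = l.length + 1 := by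
  have hper : ∀ k, IsPeriodicPt (formPerm (x :: l)) k x ↔ l.length + 1 ∣ k := by
    intro k
    rw [IsPeriodicPt, IsFixedPt, Perm.iterate_eq_pow, formPerm_pow_apply_head x l hl,
      Nat.dvd_iff_mod_eq_zero]
    conv_lhs => rhs; rw [show x = (x :: l)[0] from rfl]
    rw [hl.getElem_inj_iff]
    rfl
  exact Nat.dvd_antisymm (IsPeriodicPt.minimalPeriod_dvd ((hper _).2 dvd_rfl))
    ((hper _).1 (isPeriodicPt_minimalPeriod _ _))

end List

theorem List.exists_eq_append_pair_or_append_singleton {α : Type*} {cs : List (List α)}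
    (hne : ∀ B ∈ cs, B ≠ []) (hlen : 2 ≤ cs.flatten.length) :
    ∃ pre C b a, cs = pre ++ [C ++ [b, a]] ∨ cs = pre ++ [C ++ [b], [a]] := by
  rcases cs.eq_nil_or_concat' with rfl | ⟨L, B, rfl⟩
  · simp at hlen
  rcases B.eq_nil_or_concat' with rfl | ⟨B, a, rfl⟩
  · exact absurd rfl (hne [] (by simp))
  rcases B.eq_nil_or_concat' with rfl | ⟨C, b, rfl⟩
  · rcases L.eq_nil_or_concat' with rfl | ⟨pre, D, rfl⟩
    · simp at hlen
    rcases D.eq_nil_or_concat' with rfl | ⟨C, b, rfl⟩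
    · exact absurd rfl (hne [] (by simp))
    exact ⟨pre, C, b, a, Or.inr (by simp)⟩
  · exact ⟨L, C, b, a, Or.inl (by simp)⟩

namespace Equiv.Perm

variable {α : Type*}

theorem pow_apply_eq_formPerm_pow_apply [DecidableEq α] {σ : Perm α} {l : List α}
    (h : ∀ x ∈ l, σ x = l.formPerm x) {x : α} (hx : x ∈ l) (k : ℕ) :
    (σ ^ k) x = (l.formPerm ^ k) x := by
  induction k with
  | zero => rfl
  | succ k ih =>
    rw [pow_succ', pow_succ', Perm.mul_apply, Perm.mul_apply, ih,
      h _ (by simpa using l.form_perm_zpow_apply_mem_imp_mem x hx k)]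

theorem minimalPeriod_pos [Finite α] (σ : Perm α) (x : α) :
    0 < minimalPeriod σ x :=
  minimalPeriod_pos_of_mem_periodicPts (σ.injective.mem_periodicPts x)

theorem pow_mod_minimalPeriod_apply (σ : Perm α) (x : α) (k : ℕ) :
    (σ ^ (k % minimalPeriod σ x)) x = (σ ^ k) x := by
  simp only [← Perm.iterate_eq_pow, iterate_mod_minimalPeriod_eq]

end Equiv.Perm

/-- `cs` is a standard cycle form, given as the list of its cycles. -/
def IsStdCycleForm {α : Type*} [LT α] (cs : List (List α)) : Prop :=
  (∀ B ∈ cs, B ≠ [] ∧ ∀ a ∈ B.head?, ∀ x ∈ B.tail, a < x) ∧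
    cs.Pairwise fun B C => ∀ a ∈ B.head?, ∀ x ∈ C, a < x

namespace IsStdCycleForm

variable {α : Type*} [LT α] {pre : List (List α)} {C : List α} {a b : α}

theorem split (h : IsStdCycleForm (pre ++ [C ++ [b, a]])) :
    IsStdCycleForm (pre ++ [C ++ [b], [a]]) := by
  rcases C with _ | ⟨c, C⟩ <;>
    simp_all [IsStdCycleForm, List.pairwise_append, or_imp, forall_and] <;> tauto

theorem merge (h : IsStdCycleForm (pre ++ [C ++ [b], [a]])) :
    IsStdCycleForm (pre ++ [C ++ [b, a]]) := by
  rcases C with _ | ⟨c, C⟩ <;>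
    simp_all [IsStdCycleForm, List.pairwise_append, or_imp, forall_and] <;> tauto

end IsStdCycleForm

section CycleList

variable {n : ℕ} (π : Perm (Fin n)) {m x : Fin n}

theorem length_cycleList : (cycleList π m).length = minimalPeriod π m := by
  simp [cycleList]

theorem getElem_cycleList {k : ℕ} (hk : k < (cycleList π m).length) :
    (cycleList π m)[k] = (π ^ k) m := by
  simp [cycleList]

theorem head?_cycleList : (cycleList π m).head? = some m := by
  simp [cycleList, List.head?_range, (π.minimalPeriod_pos m).ne']

theorem nodup_cycleList : (cycleList π m).Nodup := by
  refine List.nodup_range.map_on fun i hi j hj h => ?_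
  simp only [← Perm.iterate_eq_pow] at h
  exact iterate_injOn_Iio_minimalPeriod (List.mem_range.1 hi) (List.mem_range.1 hj) h

theorem mem_cycleList_iff : x ∈ cycleList π m ↔ π.SameCycle m x := by
  constructor
  · simp only [cycleList, List.mem_map]
    rintro ⟨k, -, rfl⟩
    exact ⟨k, by simp⟩
  · intro h
    obtain ⟨k, rfl⟩ := h.exists_nat_pow_eq
    rw [← π.pow_mod_minimalPeriod_apply]
    exact List.mem_map.2 ⟨_, List.mem_range.2 (Nat.mod_lt _ (π.minimalPeriod_pos m)), rfl⟩

theorem formPerm_cycleList_apply (hx : x ∈ cycleList π m) :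
    (cycleList π m).formPerm x = π x := by
  obtain ⟨j, hj, rfl⟩ := List.getElem_of_mem hx
  rw [List.formPerm_apply_getElem _ (nodup_cycleList π), getElem_cycleList, getElem_cycleList,
    length_cycleList, π.pow_mod_minimalPeriod_apply, pow_succ', Perm.mul_apply]

theorem mem_cycleMins_iff : m ∈ cycleMins π ↔ ∀ x, π.SameCycle m x → m ≤ x := by
  simp only [cycleMins, Finset.mem_sort, Finset.mem_filter, Finset.mem_univ, true_and]
  constructor
  · intro h x hx
    obtain ⟨j, hj, rfl⟩ := List.getElem_of_mem ((mem_cycleList_iff π).2 hx)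
    rw [getElem_cycleList]
    refine h j (hj.trans_le ?_)
    simpa [length_cycleList] using minimalPeriod_le_card (f := π) (x := m)
  · exact fun h k _ => h _ ⟨k, by simp⟩

theorem eq_of_mem_cycleMins_of_sameCycle {m' : Fin n} (hm : m ∈ cycleMins π)
    (hm' : m' ∈ cycleMins π) (h : π.SameCycle m m') : m = m' :=
  le_antisymm ((mem_cycleMins_iff π).1 hm _ h) ((mem_cycleMins_iff π).1 hm' _ h.symm)

theorem exists_mem_cycleMins_sameCycle (x : Fin n) : ∃ m ∈ cycleMins π, π.SameCycle m x := by
  classical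
  set s := (cycleList π x).toFinset
  have hs : s.Nonempty := ⟨x, List.mem_toFinset.2 ((mem_cycleList_iff π).2 (.refl π x))⟩
  have hmin : π.SameCycle x (s.min' hs) :=
    (mem_cycleList_iff π).1 (List.mem_toFinset.1 (s.min'_mem hs))
  refine ⟨s.min' hs, (mem_cycleMins_iff π).2 fun y hy => s.min'_le y ?_, hmin.symm⟩
  exact List.mem_toFinset.2 ((mem_cycleList_iff π).2 (hmin.trans hy))

end CycleList

section CycleForm

variable {n : ℕ}

noncomputable def cycleForm (π : Perm (Fin n)) : List (List (Fin n)) :=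
  (cycleMins π).map (cycleList π)

variable (π : Perm (Fin n))

theorem flattenPerm_eq_map_flatten_cycleForm :
    flattenPerm π = (cycleForm π).flatten.map fun m => (m : ℕ) + 1 :=
  rfl

theorem mem_cycleForm_iff {B : List (Fin n)} :
    B ∈ cycleForm π ↔ ∃ m ∈ cycleMins π, cycleList π m = B :=
  List.mem_map

theorem nodup_flatten_cycleForm : (cycleForm π).flatten.Nodup := by
  refine List.nodup_flatten.2 ⟨fun B hB => ?_, ?_⟩
  · obtain ⟨m, -, rfl⟩ := (mem_cycleForm_iff π).1 hB
    exact nodup_cycleList π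
  · refine List.pairwise_map.2 ((Finset.sort_nodup _ _).imp_of_mem fun hm hm' hne => ?_)
    refine fun x hx hx' => hne ?_
    exact eq_of_mem_cycleMins_of_sameCycle π hm hm'
      (((mem_cycleList_iff π).1 hx).trans ((mem_cycleList_iff π).1 hx').symm)

theorem mem_flatten_cycleForm (x : Fin n) : x ∈ (cycleForm π).flatten := by
  obtain ⟨m, hm, hx⟩ := exists_mem_cycleMins_sameCycle π x
  exact List.mem_flatten_of_mem (List.mem_map_of_mem hm) ((mem_cycleList_iff π).2 hx)

theorem isStdCycleForm_cycleForm : IsStdCycleForm (cycleForm π) := by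
  refine ⟨fun B hB => ?_, ?_⟩
  · obtain ⟨m, hm, rfl⟩ := (mem_cycleForm_iff π).1 hB
    obtain ⟨t, ht⟩ := List.head?_eq_some_iff.1 (head?_cycleList π (m := m))
    refine ⟨by simp [ht], fun a ha x hx => ?_⟩
    rw [ht, List.head?_cons, Option.mem_some_iff] at ha
    subst a
    rw [ht, List.tail_cons] at hx
    have hxm : m ≠ x := fun h => (List.nodup_cons.1 (ht ▸ nodup_cycleList π)).1 (h ▸ hx)
    refine lt_of_le_of_ne ((mem_cycleMins_iff π).1 hm x ((mem_cycleList_iff π).1 ?_)) hxm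
    simp [ht, hx]
  · refine List.pairwise_map.2 (((Finset.sortedLT_sort _).pairwise).imp_of_mem ?_)
    intro m m' _ hm' hlt a ha x hx
    rw [head?_cycleList, Option.mem_some_iff] at ha
    subst ha
    exact hlt.trans_le ((mem_cycleMins_iff π).1 hm' x ((mem_cycleList_iff π).1 hx))

theorem prod_map_formPerm_cycleForm : ((cycleForm π).map List.formPerm).prod = π := by
  ext x
  obtain ⟨B, hB, hx⟩ := List.mem_flatten.1 (mem_flatten_cycleForm π x)
  obtain ⟨m, -, rfl⟩ := (mem_cycleForm_iff π).1 hB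
  rw [List.prod_map_formPerm_apply_of_mem (nodup_flatten_cycleForm π) hB hx,
    formPerm_cycleList_apply π hx]

theorem cycleList_eq_of_forall_apply_eq_formPerm {σ : Perm (Fin n)} {m : Fin n}
    {t : List (Fin n)} (hnd : (m :: t).Nodup) (h : ∀ x ∈ m :: t, σ x = (m :: t).formPerm x) :
    cycleList σ m = m :: t := by
  have hpow := σ.pow_apply_eq_formPerm_pow_apply h List.mem_cons_self
  have hper : minimalPeriod σ m = t.length + 1 := by
    rw [← List.minimalPeriod_formPerm_cons hnd]
    exact minimalPeriod_eq_minimalPeriod_iff.2 fun k => by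
      simp only [IsPeriodicPt, IsFixedPt, Perm.iterate_eq_pow, hpow]
  refine List.ext_getElem (by simp [length_cycleList, hper]) fun k hk hk' => ?_
  rw [getElem_cycleList, hpow, List.formPerm_pow_apply_head _ _ hnd]
  simp only [List.length_cons] at hk'
  simp [Nat.mod_eq_of_lt hk']

theorem cycleForm_prod_map_formPerm {cs : List (List (Fin n))} (hcs : IsStdCycleForm cs)
    (hnd : cs.flatten.Nodup) (hcov : ∀ x, x ∈ cs.flatten) :
    cycleForm (cs.map List.formPerm).prod = cs := by
  set σ := (cs.map List.formPerm).prod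
  have hcyc : ∀ B ∈ cs, ∀ m ∈ B.head?, cycleList σ m = B := by
    intro B hB m hm
    obtain ⟨t, rfl⟩ := List.head?_eq_some_iff.1 hm
    exact cycleList_eq_of_forall_apply_eq_formPerm (List.nodup_flatten.1 hnd |>.1 _ hB)
      fun x hx => List.prod_map_formPerm_apply_of_mem hnd hB hx
  have hheads : (cs.filterMap List.head?).SortedLT :=
    (List.pairwise_filterMap.2 (hcs.2.imp fun h a ha b hb =>
      h a ha b (List.mem_of_mem_head? hb))).sortedLT
  have hmins : cycleMins σ = cs.filterMap List.head? := by
    refine (Finset.sortedLT_sort _).eq_of_mem_iff hheads fun m => ?_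
    rw [← cycleMins, mem_cycleMins_iff, List.mem_filterMap]
    constructor
    · intro hmin
      obtain ⟨B, hB, hmB⟩ := List.mem_flatten.1 (hcov m)
      obtain ⟨a, t, rfl⟩ := List.exists_cons_of_ne_nil (hcs.1 B hB).1
      refine ⟨_, hB, ?_⟩
      rcases List.mem_cons.1 hmB with rfl | hmt
      · rfl
      · have hma : m ≤ a := hmin a ((mem_cycleList_iff σ).1 (by
          rw [hcyc _ hB a rfl]; exact hmB)).symm
        exact absurd ((hcs.1 _ hB).2 a rfl m hmt) (not_lt.2 hma)
    · rintro ⟨B, hB, hm⟩ x hx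
      obtain ⟨t, rfl⟩ := List.head?_eq_some_iff.1 hm
      rw [← mem_cycleList_iff, hcyc _ hB m hm] at hx
      rcases List.mem_cons.1 hx with rfl | hxt
      · rfl
      · exact ((hcs.1 _ hB).2 m hm x hxt).le
  rw [cycleForm, hmins, List.map_filterMap]
  conv_rhs => rw [← List.filterMap_some (l := cs)]
  refine List.filterMap_congr fun B hB => ?_
  obtain ⟨a, t, rfl⟩ := List.exists_cons_of_ne_nil (hcs.1 B hB).1
  simp [hcyc _ hB a rfl]

end CycleForm

section SwapLastTwo

variable {n : ℕ}

theorem two_le_length_flatten_cycleForm (hn : 2 ≤ n) (π : Perm (Fin n)) :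
    2 ≤ (cycleForm π).flatten.length :=
  calc 2 ≤ Fintype.card (Fin n) := by simpa using hn
    _ = (cycleForm π).flatten.toFinset.card := by
      rw [← Finset.card_univ]
      congr
      ext x
      simp only [Finset.mem_univ, List.mem_toFinset, mem_flatten_cycleForm]
    _ ≤ _ := List.toFinset_card_le _

theorem flatten_cycleForm_eq_of_prod {π σ : Perm (Fin n)} {cs : List (List (Fin n))}
    (hcs : IsStdCycleForm cs) (hflat : cs.flatten = (cycleForm π).flatten)
    (hσ : (cs.map List.formPerm).prod = σ) : (cycleForm σ).flatten = (cycleForm π).flatten := by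
  rw [← hσ, cycleForm_prod_map_formPerm hcs (hflat ▸ nodup_flatten_cycleForm π)
    (fun x => hflat ▸ mem_flatten_cycleForm π x), hflat]

theorem exists_flatten_cycleForm_mul_swap_eq (hn : 2 ≤ n) (π : Perm (Fin n)) :
    ∃ w b a, (cycleForm π).flatten = w ++ [b, a] ∧
      (cycleForm (π * Equiv.swap a b)).flatten = (cycleForm π).flatten := by
  have hstd := isStdCycleForm_cycleForm π
  obtain ⟨pre, C, b, a, hπ | hπ⟩ := List.exists_eq_append_pair_or_append_singleton
    (fun B hB => (hstd.1 B hB).1) (two_le_length_flatten_cycleForm hn π)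
  · refine ⟨pre.flatten ++ C, b, a, by simp [hπ], ?_⟩
    rw [hπ] at hstd
    refine flatten_cycleForm_eq_of_prod (cs := pre ++ [C ++ [b], [a]]) hstd.split
      (by simp [hπ]) ?_
    conv_rhs => rw [← prod_map_formPerm_cycleForm π, hπ]
    simp [List.formPerm_append_pair, mul_assoc, swap_comm]
  · refine ⟨pre.flatten ++ C, b, a, by simp [hπ], ?_⟩
    rw [hπ] at hstd
    refine flatten_cycleForm_eq_of_prod (cs := pre ++ [C ++ [b, a]]) hstd.merge
      (by simp [hπ]) ?_
    conv_rhs => rw [← prod_map_formPerm_cycleForm π, hπ]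
    simp [List.formPerm_append_pair, mul_assoc, swap_comm]

noncomputable def swapLastTwo (π : Perm (Fin n)) : Perm (Fin n) :=
  match (cycleForm π).flatten.reverse with
  | a :: b :: _ => π * Equiv.swap a b
  | _ => π

theorem swapLastTwo_eq {π : Perm (Fin n)} {w : List (Fin n)} {a b : Fin n}
    (h : (cycleForm π).flatten = w ++ [b, a]) : swapLastTwo π = π * Equiv.swap a b := by
  simp [swapLastTwo, h]

theorem flatten_cycleForm_swapLastTwo (hn : 2 ≤ n) (π : Perm (Fin n)) :
    (cycleForm (swapLastTwo π)).flatten = (cycleForm π).flatten := by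
  obtain ⟨w, b, a, hw, hflat⟩ := exists_flatten_cycleForm_mul_swap_eq hn π
  rwa [swapLastTwo_eq hw]

theorem swapLastTwo_swapLastTwo (hn : 2 ≤ n) (π : Perm (Fin n)) :
    swapLastTwo (swapLastTwo π) = π := by
  obtain ⟨w, b, a, hw, hflat⟩ := exists_flatten_cycleForm_mul_swap_eq hn π
  rw [swapLastTwo_eq hw, swapLastTwo_eq (hflat.trans hw), mul_swap_mul_self]

theorem swapLastTwo_ne (hn : 2 ≤ n) (π : Perm (Fin n)) : swapLastTwo π ≠ π := by
  obtain ⟨w, b, a, hw, -⟩ := exists_flatten_cycleForm_mul_swap_eq hn π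
  have hba : b ≠ a := by
    have := (hw ▸ nodup_flatten_cycleForm π).sublist (List.sublist_append_right w [b, a])
    simpa using this
  rw [swapLastTwo_eq hw, Ne, mul_eq_left, Equiv.swap_eq_one_iff]
  exact hba.symm

end SwapLastTwo

theorem even_card_filter_flattenPerm {n : ℕ} (hn : 2 ≤ n) (P : List ℕ → Prop)
    [DecidablePred P] : Even #{π : Perm (Fin n) | P (flattenPerm π)} := by
  have hflat (π : Perm (Fin n)) : flattenPerm (swapLastTwo π) = flattenPerm π := by
    rw [flattenPerm_eq_map_flatten_cycleForm, flattenPerm_eq_map_flatten_cycleForm,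
      flatten_cycleForm_swapLastTwo hn]
  rw [← ZMod.natCast_eq_zero_iff_even, Finset.card_eq_sum_ones, Nat.cast_sum, Nat.cast_one]
  refine Finset.sum_involution (fun π _ => swapLastTwo π) (fun _ _ => by decide)
    (fun π _ _ => swapLastTwo_ne hn π) (fun π hπ => ?_)
    (fun π _ => swapLastTwo_swapLastTwo hn π)
  simpa [hflat] using hπ

theorem gCount_even_general (n r k : ℕ) (hn : 2 ≤ n) :
    Even (gCount n r [1, k]) :=
  even_card_filter_flattenPerm hn fun w => [1, k] <+: w ∧ occ w = r

/-- For all `n ≥ 2`, `r ≥ 1` and `k ≥ 2`, the number `g_{n,r}(1k)` is even. -/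
theorem gCount_even (n r k : ℕ) (hn : 2 ≤ n) (hr : 1 ≤ r) (hk : 2 ≤ k) :
    Even (gCount n r [1, k]) :=
  gCount_even_general n r k hn
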